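/- arXiv:1606.06781 — 2 statements merged into one kernel-verified Lean document; each statement's English description precedes it below -/
import Mathlib

section
/- Let k ≥ 1 and let V ⊆ W_k be a ℚ-subspace containing the form s_{[2k]} = s_1 + ⋯ + s_{2k}. If s_j ∈ V for some j ∈ [2k], then 𝒜(V) = −1. -/
open scoped Classical

/-- The linear form `s_J = Σ_{j ∈ J} s_j` in the variables `s_1,…,s_{2k}`, viewed as a
vector of `ℚ^{2k}`. -/
noncomputable def sForm (k : ℕ) (J : Finset (Fin (2 * k))) : Fin (2 * k) → ℚ :=
  fun i => if i ∈ J then 1 else 0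

/-- `𝒜(V) := Σ_{∅ ≠ J ⊆ [2k], s_J ∈ V} (−1)^{#J}`. -/
noncomputable def formSum (k : ℕ) (V : Submodule ℚ (Fin (2 * k) → ℚ)) : ℤ :=
  ∑ J ∈ Finset.univ.filter
      (fun J : Finset (Fin (2 * k)) => J.Nonempty ∧ sForm k J ∈ V),
    (-1 : ℤ) ^ J.card

lemma sForm_insert (k : ℕ) (J : Finset (Fin (2 * k))) (j : Fin (2 * k)) (hj : j ∉ J) :
    sForm k (insert j J) = sForm k J + sForm k {j} := by
  funext i
  simp only [sForm, Pi.add_apply, Finset.mem_insert, Finset.mem_singleton]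
  by_cases h1 : i = j
  · subst h1; simp [hj]
  · simp [h1]

lemma sForm_erase (k : ℕ) (J : Finset (Fin (2 * k))) (j : Fin (2 * k)) (hj : j ∈ J) :
    sForm k (J.erase j) = sForm k J - sForm k {j} := by
  have h : j ∉ J.erase j := Finset.notMem_erase j J
  have := sForm_insert k (J.erase j) j h
  rw [Finset.insert_erase hj] at this
  rw [this]; ring

/-- Let `k ≥ 1` and let `V ⊆ W_k` be a ℚ-subspace containing `s_{[2k]}`. If `s_j ∈ V`
for some `j ∈ [2k]`, then `𝒜(V) = −1`. -/
theorem formSum_eq_neg_one (k : ℕ) (hk : 1 ≤ k) (V : Submodule ℚ (Fin (2 * k) → ℚ))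
    (hV : sForm k Finset.univ ∈ V) (j : Fin (2 * k)) (hj : sForm k {j} ∈ V) :
    formSum k V = -1 := by
  classical
  set S := Finset.univ.filter
      (fun J : Finset (Fin (2 * k)) => J.Nonempty ∧ sForm k J ∈ V) with hS
  have hjS : ({j} : Finset (Fin (2 * k))) ∈ S := by
    simp [hS, Finset.singleton_nonempty, hj]
  have key : ∑ J ∈ S.erase {j}, (-1 : ℤ) ^ J.card = 0 := by
    have hmemS : ∀ J : Finset (Fin (2 * k)), J ∈ S ↔ J.Nonempty ∧ sForm k J ∈ V := by
      intro J; rw [hS, Finset.mem_filter]; simp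
    have hmem : ∀ J ∈ S.erase {j},
        (if j ∈ J then J.erase j else insert j J) ∈ S.erase {j} := by
      intro J hJ
      rw [Finset.mem_erase] at hJ
      obtain ⟨hne, hJS⟩ := hJ
      rw [hmemS] at hJS
      obtain ⟨hJne, hJV⟩ := hJS
      rw [Finset.mem_erase, hmemS]
      by_cases h : j ∈ J
      · simp only [h, if_true]
        refine ⟨?_, ?_, ?_⟩
        · intro heq
          apply hne
          have := Finset.insert_erase h
          rw [heq] at this
          simpa using this.symm
        · obtain ⟨x, hx⟩ := hJne
          by_cases hxj : x = j
          · by_contra hemp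
            rw [Finset.not_nonempty_iff_eq_empty] at hemp
            apply hne
            apply Finset.Subset.antisymm
            · intro y hy
              by_cases hyj : y = j
              · simp [hyj]
              · exfalso
                have : y ∈ J.erase j := Finset.mem_erase.mpr ⟨hyj, hy⟩
                simp [hemp] at this
            · simp [h]
          · exact ⟨x, Finset.mem_erase.mpr ⟨hxj, hx⟩⟩
        · rw [sForm_erase k J j h]
          exact Submodule.sub_mem V hJV hj
      · simp only [h, if_false]
        refine ⟨?_, Finset.insert_nonempty _ _, ?_⟩
        · intro heq
          apply hJne.ne_empty
          have hsub : J ⊆ {j} := heq ▸ Finset.subset_insert j J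
          rcases Finset.subset_singleton_iff.mp hsub with h' | h'
          · exact h'
          · exact absurd (h' ▸ Finset.mem_singleton_self j) h
        · rw [sForm_insert k J j h]
          exact Submodule.add_mem V hJV hj
    have hcancel : ∀ J ∈ S.erase {j},
        (-1 : ℤ) ^ J.card + (-1 : ℤ) ^ (if j ∈ J then J.erase j else insert j J).card = 0 := by
      intro J _
      by_cases h : j ∈ J
      · simp only [h, if_true]
        have : J.card = (J.erase j).card + 1 := (Finset.card_erase_add_one h).symm
        rw [this, pow_succ]; ring
      · simp only [h, if_false]
        rw [Finset.card_insert_of_notMem h, pow_succ]; ring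
    have hne : ∀ J ∈ S.erase {j},
        (if j ∈ J then J.erase j else insert j J) ≠ J := by
      intro J _
      by_cases h : j ∈ J
      · simp only [h, if_true]
        intro heq
        have hni := Finset.notMem_erase j J
        rw [heq] at hni
        exact hni h
      · simp only [h, if_false]
        intro heq
        have hin := Finset.mem_insert_self j J
        rw [heq] at hin
        exact h hin
    have hinv : ∀ J ∈ S.erase {j},
        (if j ∈ (if j ∈ J then J.erase j else insert j J)
          then (if j ∈ J then J.erase j else insert j J).erase j
          else insert j (if j ∈ J then J.erase j else insert j J)) = J := by
      intro J _
      by_cases h : j ∈ J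
      · simp [h, Finset.notMem_erase, Finset.insert_erase h]
      · simp [h, Finset.erase_insert h]
    exact Finset.sum_involution (fun J _ => if j ∈ J then J.erase j else insert j J)
      (fun J hJ => hcancel J hJ) (fun J hJ _ => hne J hJ)
      (fun J hJ => hmem J hJ) (fun J hJ => hinv J hJ)
  have := Finset.add_sum_erase S (fun J => (-1 : ℤ) ^ J.card) hjS
  rw [formSum, ← hS, ← this, key]
  simp
end

section
/- Let k ≥ 1 and let V ⊆ W_k be a ℚ-subspace containing the form s_{[2k]} = s_1 + ⋯ + s_{2k}, with dim V = 2k − 1. Then 𝒜(V) − dim V ≤ binom(2k,k) − 2k, with equality if and only if there is a set J ⊆ [2k] with #J = k and 1 ∈ J such that V = Span_ℚ({s_j − s_1 : j ∈ J} ∪ {s_j + s_1 : j ∈ [2k] \ J}). -/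
open scoped Classical

/-!
A codimension-one subspace `V` is the kernel of `x ↦ a ⬝ᵥ x` for some weight vector `a`, and
`𝒜(V) + 1` is the signed count of the zero-sum subsets of `a`. If some `a i = 0`, toggling `i`
shows this count is `0`. Otherwise, with `N` the set of negative entries, `J ↦ J ∆ N` turns
the zero-sum subsets of `a` into the subsets of `|a|`-weight `∑_{i ∈ N} |a i|`; for positive
weights these form an antichain, so Sperner's theorem bounds the count by `binom(2k,k)`.
In the equality case the antichain is the whole middle layer, so all `k`-subsets have the same
`|a|`-weight, `|a|` is constant, and `a` is a multiple of a `±1` vector with `k` entries of each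
sign, whose kernel is the span in the statement.
-/

open Finset
open scoped symmDiff

namespace Finset

variable {α : Type*} [DecidableEq α]

theorem card_symmDiff_add_two_mul_card_inter (s t : Finset α) :
    #(s ∆ t) + 2 * #(s ∩ t) = #s + #t := by
  have := card_union_add_card_inter s t
  have := card_le_card (inter_subset_union (s := s) (t := t))
  rw [symmDiff_eq_sup_sdiff_inf, sup_eq_union, inf_eq_inter,
    card_sdiff_of_subset inter_subset_union]
  omega

theorem neg_one_pow_card_symmDiff {R : Type*} [Monoid R] [HasDistribNeg R] (s t : Finset α) :
    (-1 : R) ^ #(s ∆ t) = (-1) ^ #s * (-1) ^ #t := by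
  rw [← pow_add, ← card_symmDiff_add_two_mul_card_inter, pow_add, pow_mul, neg_one_sq, one_pow,
    mul_one]

theorem sum_symmDiff_of_forall_eq_zero {M : Type*} [AddCommMonoid M] {f : α → M}
    {s t : Finset α} (h : ∀ x ∈ t, f x = 0) : ∑ x ∈ s ∆ t, f x = ∑ x ∈ s, f x := by
  rw [sum_subset symmDiff_le_sup fun x hx hx' => h x (by simp only [mem_symmDiff] at hx'; grind),
    sup_eq_union, ← sum_subset subset_union_left fun x hx hxs => h x (by simp_all)]

end Finset

section SumLevel

variable {M ι : Type*} [AddCommMonoid M] [DecidableEq M] [Fintype ι]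

def sumLevel (b : ι → M) (t : M) : Finset (Finset ι) := {K | ∑ i ∈ K, b i = t}

@[simp]
theorem mem_sumLevel {b : ι → M} {t : M} {K : Finset ι} :
    K ∈ sumLevel b t ↔ ∑ i ∈ K, b i = t := by
  simp [sumLevel]

def signedZeroSumCount (a : ι → M) : ℤ := ∑ J ∈ sumLevel a 0, (-1) ^ #J

theorem isAntichain_sumLevel [PartialOrder M] [IsOrderedCancelAddMonoid M] {b : ι → M}
    (hb : ∀ i, 0 < b i) (t : M) :
    IsAntichain (· ⊆ ·) (sumLevel b t : Set (Finset ι)) := by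
  intro K hK L hL hne hKL
  obtain ⟨i, hiL, hiK⟩ := exists_of_ssubset (ssubset_of_subset_of_ne hKL hne)
  have := sum_lt_sum_of_subset hKL hiL hiK (hb i) fun j _ _ => (hb j).le
  simp_all

variable [DecidableEq ι]

theorem signedZeroSumCount_eq_zero_of_apply_eq_zero {a : ι → M} {i : ι} (hi : a i = 0) :
    signedZeroSumCount a = 0 := by
  have hsum (J : Finset ι) : ∑ j ∈ J ∆ {i}, a j = ∑ j ∈ J, a j :=
    sum_symmDiff_of_forall_eq_zero (by simpa using hi)
  refine sum_involution (fun J _ => J ∆ {i}) (fun J _ => ?_) (fun J _ _ => ?_)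
    (fun J hJ => by simpa [hsum] using hJ) (fun J _ => symmDiff_symmDiff_cancel_right _ _)
  · rw [neg_one_pow_card_symmDiff, card_singleton]; ring
  · simp [symmDiff_eq_left]

end SumLevel

section SignedZeroSumCount

variable {𝕜 ι : Type*} [Field 𝕜] [LinearOrder 𝕜] [IsStrictOrderedRing 𝕜] [Fintype ι]
  [DecidableEq ι]

theorem sum_abs_symmDiff_neg (a : ι → 𝕜) (J : Finset ι) :
    ∑ i ∈ J ∆ ({i | a i < 0} : Finset ι), |a i| =
      ∑ i ∈ J, a i + ∑ i ∈ ({i | a i < 0} : Finset ι), |a i| := by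
  set N : Finset ι := ({i | a i < 0} : Finset ι)
  have hJN : ∑ i ∈ J \ N, |a i| = ∑ i ∈ J \ N, a i :=
    sum_congr rfl fun i hi => abs_of_nonneg (by simpa [N] using (mem_sdiff.1 hi).2)
  have habs (s : Finset ι) (hs : s ⊆ N) : ∑ i ∈ s, |a i| = -∑ i ∈ s, a i := by
    rw [← sum_neg_distrib]
    exact sum_congr rfl fun i hi => abs_of_neg (by simpa [N] using hs hi)
  rw [symmDiff_def, sup_eq_union, sum_union disjoint_sdiff_sdiff, hJN, habs _ sdiff_subset,
    habs _ subset_rfl]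
  linear_combination (sum_sdiff_sub_sum_sdiff (s₁ := N) (s₂ := J) (f := a))

theorem signedZeroSumCount_eq_neg_one_pow_mul (a : ι → 𝕜) :
    signedZeroSumCount a = (-1) ^ #({i | a i < 0} : Finset ι) *
      ∑ K ∈ sumLevel (|a ·|) (∑ i ∈ ({i | a i < 0} : Finset ι), |a i|), (-1) ^ #K := by
  rw [signedZeroSumCount, mul_sum]
  set N : Finset ι := {i | a i < 0}
  refine sum_nbij' (· ∆ N) (· ∆ N) (fun J hJ => ?_) (fun K hK => ?_)
    (fun J _ => symmDiff_symmDiff_cancel_right _ _) (fun K _ => symmDiff_symmDiff_cancel_right _ _)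
    (fun J _ => ?_)
  · simp_all [N, sum_abs_symmDiff_neg]
  · have := sum_abs_symmDiff_neg a (K ∆ N)
    simp_all [N]
  · rw [neg_one_pow_card_symmDiff, mul_comm, mul_assoc, ← pow_add, Even.neg_one_pow ⟨_, rfl⟩,
      mul_one]

theorem signedZeroSumCount_le_card_sumLevel_abs (a : ι → 𝕜) :
    signedZeroSumCount a ≤ #(sumLevel (|a ·|) (∑ i ∈ ({i | a i < 0} : Finset ι), |a i|)) := by
  rw [signedZeroSumCount_eq_neg_one_pow_mul, mul_sum]
  refine (sum_le_card_nsmul _ _ 1 fun K _ => ?_).trans (by simp)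
  rw [← pow_add]
  exact (le_abs_self _).trans_eq (abs_neg_one_pow _)

theorem signedZeroSumCount_le_choose (a : ι → 𝕜) :
    signedZeroSumCount a ≤ (Fintype.card ι).choose (Fintype.card ι / 2) := by
  by_cases ha : ∃ i, a i = 0
  · obtain ⟨i, hi⟩ := ha
    rw [signedZeroSumCount_eq_zero_of_apply_eq_zero hi]
    positivity
  push Not at ha
  exact (signedZeroSumCount_le_card_sumLevel_abs a).trans
    (mod_cast (isAntichain_sumLevel (fun i => abs_pos.2 (ha i)) _).sperner)

end SignedZeroSumCount

theorem Nat.choose_lt_choose_two_mul_of_ne {n r : ℕ} (h : r ≠ n) :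
    (2 * n).choose r < (2 * n).choose n := by
  have hmono : StrictMonoOn (2 * n).choose (Set.Iic n) :=
    strictMonoOn_Iic_of_lt_succ fun m hm => by
      have hpos : 0 < (2 * n).choose m := Nat.choose_pos (by omega)
      rw [Order.succ_eq_add_one]
      refine Nat.lt_of_mul_lt_mul_right (a := m + 1) ?_
      rw [Nat.choose_succ_right_eq]
      exact Nat.mul_lt_mul_of_pos_left (by omega) hpos
  rcases lt_or_gt_of_ne h with hlt | hgt
  · exact hmono (Set.mem_Iic.2 hlt.le) (Set.mem_Iic.2 le_rfl) hlt
  · rcases le_or_gt r (2 * n) with hle | hgt'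
    · rw [← Nat.choose_symm hle]
      exact hmono (Set.mem_Iic.2 (by omega)) (Set.mem_Iic.2 le_rfl) (by omega)
    · rw [Nat.choose_eq_zero_of_lt hgt']
      exact Nat.choose_pos (by omega)

/-- The LYM inequality is strict as soon as some member lies outside the middle layer. -/
theorem IsAntichain.card_eq_of_card_eq_choose {α : Type*} [Fintype α] {k : ℕ}
    (hα : Fintype.card α = 2 * k) {𝒜 : Finset (Finset α)}
    (h𝒜 : IsAntichain (· ⊆ ·) (𝒜 : Set (Finset α))) (hcard : #𝒜 = (2 * k).choose k) :
    ∀ s ∈ 𝒜, #s = k := by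
  intro s hs
  by_contra hne
  have hchoose_pos (t : Finset α) : (0 : ℚ) < (2 * k).choose #t :=
    mod_cast Nat.choose_pos (hα ▸ card_le_univ t)
  have hlym := lubell_yamamoto_meshalkin_inequality_sum_inv_choose (𝕜 := ℚ) h𝒜
  rw [hα] at hlym
  have hlt : ∑ _t ∈ 𝒜, ((2 * k).choose k : ℚ)⁻¹ < ∑ t ∈ 𝒜, ((2 * k).choose #t : ℚ)⁻¹ := by
    refine sum_lt_sum (fun t _ => ?_) ⟨s, hs, ?_⟩
    · exact inv_anti₀ (hchoose_pos t) (mod_cast Nat.choose_le_centralBinom #t k)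
    · exact inv_strictAnti₀ (hchoose_pos s) (mod_cast Nat.choose_lt_choose_two_mul_of_ne hne)
  rw [sum_const, hcard, nsmul_eq_mul,
    mul_inv_cancel₀ (mod_cast (Nat.choose_pos (by omega)).ne')] at hlt
  linarith

theorem Finset.eq_of_forall_card_eq_sum_eq {ι M : Type*} [Fintype ι] [DecidableEq ι]
    [AddCancelCommMonoid M] {b : ι → M} {k : ℕ} {t : M} (hk : 0 < k)
    (hkι : k < Fintype.card ι) (h : ∀ K : Finset ι, #K = k → ∑ i ∈ K, b i = t) (i j : ι) :
    b i = b j := by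
  rcases eq_or_ne i j with rfl | hij
  · rfl
  obtain ⟨K, hK, hKcard⟩ := exists_subset_card_eq (s := (univ.erase i).erase j) (n := k - 1)
    (by rw [card_erase_of_mem (by simpa using hij.symm), card_erase_of_mem (mem_univ _),
      card_univ]; omega)
  have hiK : i ∉ K := fun hi => by simpa using hK hi
  have hjK : j ∉ K := fun hj => by simpa using hK hj
  have hi := h (insert i K) (by rw [card_insert_of_notMem hiK]; omega)
  have hj := h (insert j K) (by rw [card_insert_of_notMem hjK]; omega)
  rw [sum_insert hiK] at hi
  rw [sum_insert hjK, ← hi] at hj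
  exact (add_right_cancel hj).symm

section SignVector

variable {R ι : Type*} [Ring R] [DecidableEq ι]

def signVector (J : Finset ι) : ι → R := fun i => if i ∈ J then 1 else -1

theorem signVector_compl [Fintype ι] (J : Finset ι) :
    (signVector Jᶜ : ι → R) = -signVector J := by
  ext i
  by_cases hi : i ∈ J <;> simp [signVector, hi]

theorem exists_mem_smul_signVector_eq [Fintype ι] {k : ℕ} (hι : Fintype.card ι = 2 * k)
    {J : Finset ι} (hJ : #J = k) {c : R} (hc : c ≠ 0) (z : ι) :
    ∃ J' : Finset ι, #J' = k ∧ z ∈ J' ∧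
      ∃ c' ≠ (0 : R), c • (signVector J : ι → R) = c' • signVector J' := by
  by_cases hz : z ∈ J
  · exact ⟨J, hJ, hz, c, hc, rfl⟩
  · refine ⟨Jᶜ, by rw [card_compl]; omega, mem_compl.2 hz, -c, neg_ne_zero.2 hc, ?_⟩
    rw [signVector_compl, smul_neg, neg_smul, neg_neg]

end SignVector

section SignedZeroSumCountExtremal

variable {𝕜 ι : Type*} [Field 𝕜] [LinearOrder 𝕜] [IsStrictOrderedRing 𝕜] [Fintype ι]
  [DecidableEq ι] {k : ℕ}

theorem signedZeroSumCount_signVector (hι : Fintype.card ι = 2 * k) {J : Finset ι}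
    (hJ : #J = k) :
    signedZeroSumCount (signVector J : ι → 𝕜) = (2 * k).choose k := by
  have hneg : ({i | signVector J i < (0 : 𝕜)} : Finset ι) = Jᶜ := by
    ext i
    rw [Finset.mem_filter]
    by_cases hi : i ∈ J <;> simp [signVector, hi]
  have habs : (fun i => |(signVector J i : 𝕜)|) = fun _ => 1 := by
    ext i; by_cases hi : i ∈ J <;> simp [signVector, hi]
  have hJc : #Jᶜ = k := by rw [card_compl]; omega
  have hlevel : sumLevel (fun _ : ι => (1 : 𝕜)) (∑ _i ∈ Jᶜ, 1) = powersetCard k univ := by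
    ext K; simp [hJc]
  rw [signedZeroSumCount_eq_neg_one_pow_mul, hneg, habs, hlevel, hJc, sum_powersetCard,
    card_univ, hι, nsmul_eq_mul, mul_left_comm, ← pow_add, Even.neg_one_pow ⟨k, rfl⟩, mul_one]

theorem exists_eq_smul_signVector_of_signedZeroSumCount_eq (hι : Fintype.card ι = 2 * k)
    (hk : 0 < k) {a : ι → 𝕜} (h : signedZeroSumCount a = (2 * k).choose k) :
    ∃ J : Finset ι, #J = k ∧ ∃ c ≠ (0 : 𝕜), a = c • signVector J := by
  have hpos : 0 < (2 * k).choose k := Nat.choose_pos (by omega)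
  have ha : ∀ i, a i ≠ 0 := fun i hi => by
    rw [signedZeroSumCount_eq_zero_of_apply_eq_zero hi] at h
    omega
  set N : Finset ι := {i | a i < 0}
  set 𝒜 := sumLevel (|a ·|) (∑ i ∈ N, |a i|)
  have hanti := isAntichain_sumLevel (fun i => abs_pos.2 (ha i)) (∑ i ∈ N, |a i|)
  have hcard : #𝒜 = (2 * k).choose k := by
    have : signedZeroSumCount a ≤ #𝒜 := signedZeroSumCount_le_card_sumLevel_abs a
    refine le_antisymm ?_ (by omega)
    simpa [hι] using hanti.sperner
  have hlayer := hanti.card_eq_of_card_eq_choose hι hcard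
  have h𝒜 : 𝒜 = powersetCard k univ :=
    eq_of_subset_of_card_le (fun K hK => mem_powersetCard_univ.2 (hlayer K hK))
      (by rw [card_powersetCard, card_univ, hι, hcard])
  have hN : #N = k := hlayer N (by simp)
  have hconst := eq_of_forall_card_eq_sum_eq hk (by omega)
    (fun K hK => (mem_sumLevel.1 (h𝒜 ▸ mem_powersetCard_univ.2 hK : K ∈ 𝒜)))
  obtain ⟨i₀, -⟩ := card_pos.1 (hN ▸ hk : 0 < #N)
  refine ⟨Nᶜ, by rw [card_compl]; omega, |a i₀|, abs_ne_zero.2 (ha i₀), funext fun i => ?_⟩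
  have hmem : i ∈ Nᶜ ↔ 0 ≤ a i := by rw [mem_compl, mem_filter]; simp
  rw [← hconst i, Pi.smul_apply, signVector, smul_eq_mul]
  by_cases hi : 0 ≤ a i
  · rw [if_pos (hmem.2 hi), mul_one, abs_of_nonneg hi]
  · rw [if_neg (mt hmem.1 hi), mul_neg_one, abs_of_neg (not_le.1 hi), neg_neg]

end SignedZeroSumCountExtremal

theorem Submodule.exists_eq_ker_of_finrank_add_one {K V : Type*} [DivisionRing K]
    [AddCommGroup V] [Module K V] [FiniteDimensional K V] (W : Submodule K V)
    (hW : Module.finrank K W + 1 = Module.finrank K V) :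
    ∃ f : Module.Dual K V, W = LinearMap.ker f := by
  have hlt : W < ⊤ := lt_top_iff_ne_top.2 fun h => by
    rw [h, finrank_top] at hW
    omega
  obtain ⟨f, hf, hWf⟩ := W.exists_le_ker_of_lt_top hlt
  refine ⟨f, eq_of_le_of_finrank_le hWf ?_⟩
  have := Submodule.finrank_lt (mt LinearMap.ker_eq_top.1 hf)
  omega

theorem span_single_sub_union_single_add_eq_ker {K ι : Type*} [Field K] [Fintype ι]
    [DecidableEq ι] {J : Finset ι} {z : ι} (hz : z ∈ J) :
    Submodule.span K
      ((fun j => Pi.single j 1 - Pi.single z 1) '' (J : Set ι) ∪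
        (fun j => Pi.single j 1 + Pi.single z 1) '' ((Jᶜ : Finset ι) : Set ι)) =
      LinearMap.ker (dotProductEquiv K ι (signVector J)) := by
  apply le_antisymm
  · rw [Submodule.span_le]
    rintro _ (⟨j, hj, rfl⟩ | ⟨j, hj, rfl⟩) <;>
      simp_all [signVector, dotProduct_sub, dotProduct_add]
  · intro x hx
    rw [LinearMap.mem_ker, dotProductEquiv_apply_apply] at hx
    have hx_eq :
        x = ∑ j, x j • (Pi.single j 1 - (signVector J j : K) • (Pi.single z 1 : ι → K)) := by
      have hsum : ∑ j, x j * signVector J j = 0 := by rw [← hx, dotProduct_comm]; rfl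
      simp only [smul_sub, sum_sub_distrib, smul_smul, ← sum_smul, hsum, zero_smul, sub_zero]
      ext i
      simp [Finset.sum_apply, Pi.single_apply]
    rw [hx_eq]
    refine Submodule.sum_mem _ fun j _ => Submodule.smul_mem _ _ (Submodule.subset_span ?_)
    by_cases hj : j ∈ J
    · exact Or.inl ⟨j, hj, by simp [signVector, hj]⟩
    · exact Or.inr ⟨j, by simpa using hj, by simp [signVector, hj]⟩

theorem sForm_singleton {k : ℕ} (j : Fin (2 * k)) : sForm k {j} = Pi.single j 1 := by
  ext i
  simp [sForm, Pi.single_apply]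

theorem dotProduct_sForm {k : ℕ} (a : Fin (2 * k) → ℚ) (J : Finset (Fin (2 * k))) :
    a ⬝ᵥ sForm k J = ∑ i ∈ J, a i := by
  simp [dotProduct, sForm]

theorem formSum_ker_dotProductEquiv {k : ℕ} (a : Fin (2 * k) → ℚ) :
    formSum k (LinearMap.ker (dotProductEquiv ℚ _ a)) = signedZeroSumCount a - 1 := by
  have hfilter : ({J | J.Nonempty ∧ sForm k J ∈ LinearMap.ker (dotProductEquiv ℚ _ a)} :
      Finset (Finset (Fin (2 * k)))) = (sumLevel a 0).erase ∅ := by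
    ext J
    simp [dotProduct_sForm, nonempty_iff_ne_empty]
  rw [formSum, hfilter, sum_erase_eq_sub (by simp), signedZeroSumCount, card_empty, pow_zero]

/-- Let `k ≥ 1` and let `V ⊆ W_k` be a ℚ-subspace containing `s_{[2k]}`, with
`dim V = 2k − 1`. Then `𝒜(V) − dim V ≤ binom(2k,k) − 2k`, with equality if and only if
there is `J ⊆ [2k]` with `#J = k` and `1 ∈ J` (the first index) such that
`V = Span_ℚ({s_j − s_1 : j ∈ J} ∪ {s_j + s_1 : j ∈ [2k] \ J})`. -/
theorem formSum_dim_codim_one (k : ℕ) (hk : 1 ≤ k) (V : Submodule ℚ (Fin (2 * k) → ℚ))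
    (hdim : (Module.finrank ℚ V : ℤ) = 2 * k - 1) :
    formSum k V - (Module.finrank ℚ V : ℤ) ≤ (Nat.choose (2 * k) k : ℤ) - 2 * k ∧
    (formSum k V - (Module.finrank ℚ V : ℤ) = (Nat.choose (2 * k) k : ℤ) - 2 * k ↔
      ∃ J : Finset (Fin (2 * k)), J.card = k ∧ (⟨0, by omega⟩ : Fin (2 * k)) ∈ J ∧
        V = Submodule.span ℚ
          ((fun j : Fin (2 * k) => sForm k {j} - sForm k {(⟨0, by omega⟩ : Fin (2 * k))}) ''
              (J : Set (Fin (2 * k))) ∪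
            (fun j : Fin (2 * k) => sForm k {j} + sForm k {(⟨0, by omega⟩ : Fin (2 * k))}) ''
              ((Jᶜ : Finset (Fin (2 * k))) : Set (Fin (2 * k))))) := by
  have hι : Fintype.card (Fin (2 * k)) = 2 * k := Fintype.card_fin _
  obtain ⟨f, rfl⟩ := V.exists_eq_ker_of_finrank_add_one (by rw [Module.finrank_fin_fun]; omega)
  obtain ⟨a, rfl⟩ := (dotProductEquiv ℚ (Fin (2 * k))).surjective f
  have hle : signedZeroSumCount a ≤ (2 * k).choose k := by
    simpa [hι] using signedZeroSumCount_le_choose a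
  simp only [hdim, sForm_singleton]
  refine ⟨by rw [formSum_ker_dotProductEquiv]; linarith, fun h => ?_, ?_⟩
  · rw [formSum_ker_dotProductEquiv] at h
    obtain ⟨J, hJ, c, hc, rfl⟩ :=
      exists_eq_smul_signVector_of_signedZeroSumCount_eq hι hk (by linarith)
    obtain ⟨J', hJ', hz, c', hc', hcJ⟩ := exists_mem_smul_signVector_eq hι hJ hc ⟨0, by omega⟩
    refine ⟨J', hJ', hz, ?_⟩
    rw [span_single_sub_union_single_add_eq_ker hz, hcJ, map_smul, LinearMap.ker_smul _ _ hc']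
  · rintro ⟨J, hJ, hz, hV⟩
    rw [hV, span_single_sub_union_single_add_eq_ker hz, formSum_ker_dotProductEquiv,
      signedZeroSumCount_signVector hι hJ]
    ring
end
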